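/- arXiv:1803.01023 — 4 statements merged into one kernel-verified Lean document; each statement's English description precedes it below -/
import Mathlib

section
/- Let (G/H, g) be a Riemannian geodesic orbit space, i.e., for each X in m there exists Z in h with ⟨[X+Z, Y]_m, X⟩ = 0 for all Y in m. Then for every Y in the centralizer C_m(h) of h in m, the endomorphism ad(Y) leaves m invariant and its restriction to m is skew-symmetric with respect to the inner product ⟨·,·⟩. -/
/-!
Invariance of the Killing form gives `B([Y, X], A) = -B(X, [Y, A]) = 0` for `A ∈ h`, so
`[Y, L] ⊆ m` for every `Y` centralizing `h`. For `Y ∈ C_m(h)` and `X ∈ m`, choose the geodesic vector `X + Z` of the orbit criterion and test it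
against `Y`: since `Z ∈ h` commutes with `Y`, the criterion reads `⟨[X, Y], X⟩ = 0`. Hence the
quadratic form `X ↦ ⟨[Y, X], X⟩` vanishes on `m`, and polarization makes `ad Y` skew on `m`.
-/

section KillingOrthogonal

variable (R : Type*) {L : Type*} [CommRing R] [LieRing L] [LieAlgebra R L]

def killingOrthogonal (S : Set L) : Submodule R L where
  carrier := {X | ∀ A ∈ S, killingForm R L X A = 0}
  add_mem' hX hX' A hA := by simp [hX A hA, hX' A hA]
  zero_mem' A _ := by simp
  smul_mem' c X hX A hA := by simp [hX A hA]

variable {R}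

theorem lie_mem_killingOrthogonal {S : Set L} {Y : L} (hY : ∀ A ∈ S, ⁅Y, A⁆ = 0) (X : L) :
    ⁅Y, X⁆ ∈ killingOrthogonal R S := by
  intro A hA
  rw [LieModule.traceForm_apply_lie_apply', hY A hA, map_zero, neg_zero]

end KillingOrthogonal

theorem LinearMap.apply_apply_eq_neg_of_forall_apply_self_eq_zero {R M : Type*} [CommRing R]
    [AddCommGroup M] [Module R M] {V : Submodule R M} (B : M →ₗ[R] M →ₗ[R] R)
    (hB : ∀ X ∈ V, ∀ X' ∈ V, B X X' = B X' X) (f : M →ₗ[R] M) (hfV : ∀ X ∈ V, f X ∈ V)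
    (hf : ∀ X ∈ V, B (f X) X = 0) :
    ∀ X ∈ V, ∀ X' ∈ V, B (f X) X' = - B X (f X') := by
  intro X hX X' hX'
  have hsum := hf (X + X') (V.add_mem hX hX')
  simp only [map_add, LinearMap.add_apply, hf X hX, hf X' hX'] at hsum
  rw [hB X hX _ (hfV X' hX')]
  linear_combination hsum

theorem lie_apply_self_eq_zero_of_geodesic_vector {R L : Type*} [CommRing R] [LieRing L]
    [LieAlgebra R L] {S m : Set L} (B : L →ₗ[R] L →ₗ[R] R) (P : L →ₗ[R] L)
    (hPid : ∀ X ∈ m, P X = X) {X Y : L} (hXgeod : ∃ Z ∈ S, ∀ Y ∈ m, B (P ⁅X + Z, Y⁆) X = 0)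
    (hY : Y ∈ m) (hYc : ∀ A ∈ S, ⁅Y, A⁆ = 0) (hXY : ⁅X, Y⁆ ∈ m) :
    B ⁅Y, X⁆ X = 0 := by
  obtain ⟨Z, hZ, hZgeod⟩ := hXgeod
  have hZY : ⁅Z, Y⁆ = 0 := by rw [← lie_skew, hYc Z hZ, neg_zero]
  have h := hZgeod Y hY
  rw [add_lie, hZY, add_zero, hPid _ hXY, ← lie_skew, map_neg, LinearMap.neg_apply] at h
  exact neg_eq_zero.mp h

theorem go_space_centralizer_acts_skew_general
    {L : Type*} [LieRing L] [LieAlgebra ℝ L]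
    (H : LieSubalgebra ℝ L)
    (m : Set L) (hm : m = {X : L | ∀ A ∈ H, killingForm ℝ L X A = 0})
    (B : L →ₗ[ℝ] L →ₗ[ℝ] ℝ)
    (hBsymm : ∀ X ∈ m, ∀ Y ∈ m, B X Y = B Y X)
    (P : L →ₗ[ℝ] L)
    (hPid : ∀ X ∈ m, P X = X)
    -- the geodesic orbit criterion of Kowalski–Vanhecke
    (hGO : ∀ X ∈ m, ∃ Z ∈ H, ∀ Y ∈ m, B (P ⁅X + Z, Y⁆) X = 0) :
    ∀ Y ∈ m, (∀ A ∈ H, ⁅Y, A⁆ = 0) →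
      (∀ X ∈ m, ⁅Y, X⁆ ∈ m) ∧
      (∀ X ∈ m, ∀ X' ∈ m, B ⁅Y, X⁆ X' = - B X ⁅Y, X'⁆) := by
  replace hm : m = killingOrthogonal ℝ (H : Set L) := hm
  subst hm
  intro Y hY hYc
  have hYm : ∀ X ∈ killingOrthogonal ℝ (H : Set L), ⁅Y, X⁆ ∈ killingOrthogonal ℝ (H : Set L) :=
    fun X _ => lie_mem_killingOrthogonal hYc X
  refine ⟨hYm, LinearMap.apply_apply_eq_neg_of_forall_apply_self_eq_zero B hBsymm
    (LieAlgebra.ad ℝ L Y) hYm fun X hX => ?_⟩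
  have hXY : ⁅X, Y⁆ ∈ killingOrthogonal ℝ (H : Set L) := by
    rw [← lie_skew]
    exact neg_mem (lie_mem_killingOrthogonal hYc X)
  exact lie_apply_self_eq_zero_of_geodesic_vector B P hPid (hGO X hX) hY hYc hXY

/-- Lemma on G.O. spaces: In a reductive decomposition `g = h ⊕ m` (with `m` the
Killing-orthogonal complement of the isotropy algebra `h` and `P` the projection onto `m`),
and with the geodesic orbit criterion (Kowalski–Vanhecke) satisfied for the inner product `B`
on `m`, every `Y` in the centralizer `C_m(h)` satisfies `⁅Y, m⁆ ⊆ m` and `ad Y` restricted to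
`m` is skew-symmetric with respect to `B`. -/
theorem go_space_centralizer_acts_skew
    {L : Type*} [LieRing L] [LieAlgebra ℝ L] [Module.Finite ℝ L]
    (H : LieSubalgebra ℝ L)
    (hneg : ∀ A ∈ H, A ≠ 0 → killingForm ℝ L A A < 0)
    (m : Set L) (hm : m = {X : L | ∀ A ∈ H, killingForm ℝ L X A = 0})
    (hinv : ∀ A ∈ H, ∀ X ∈ m, ⁅A, X⁆ ∈ m)
    (B : L →ₗ[ℝ] L →ₗ[ℝ] ℝ)
    (hBsymm : ∀ X ∈ m, ∀ Y ∈ m, B X Y = B Y X)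
    (hBpos : ∀ X ∈ m, X ≠ 0 → 0 < B X X)
    (P : L →ₗ[ℝ] L)
    (hPm : ∀ X : L, P X ∈ m) (hPid : ∀ X ∈ m, P X = X)
    (hPh : ∀ X : L, X - P X ∈ (H : Set L))
    -- the geodesic orbit criterion of Kowalski–Vanhecke
    (hGO : ∀ X ∈ m, ∃ Z ∈ H, ∀ Y ∈ m, B (P ⁅X + Z, Y⁆) X = 0) :
    ∀ Y ∈ m, (∀ A ∈ H, ⁅Y, A⁆ = 0) →
      (∀ X ∈ m, ⁅Y, X⁆ ∈ m) ∧
      (∀ X ∈ m, ∀ X' ∈ m, B ⁅Y, X⁆ X' = - B X ⁅Y, X'⁆) :=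
  go_space_centralizer_acts_skew_general H m hm B hBsymm P hPid hGO
end

section
/- Let g be a Lie algebra with subalgebra h and suppose ad(h) acts fully reducibly on an h-invariant complement m (so that m = C_m(h) + [h,m]). Suppose C_m(h) = C(g) + f for subalgebras with C(g) the center of g, and f a compact Lie algebra so that f = [f,f] + C(f). Then g = h + Lev(g) + Nil(g) + C(f), where Lev(g) is a semisimple Levi factor and Nil(g) is the nilradical of g. -/
/-! Every summand produced by unfolding `g = h + m`, `m = C_m(h) + ⁅h,m⁆`, `C_m(h) = C(g) + f` and
`f = ⁅f,f⁆ + C(f)` other than the ones in `h` and `C(f)` is a bracket or central, so it lies in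
`⁅g,g⁆ + C(g) ⊆ Lev(g) + Nil(g)`. -/

theorem LieAlgebra.span_lie_le_of_forall_lie_mem {R L : Type*} [CommRing R] [LieRing L]
    [LieAlgebra R L] {S : Submodule R L} (hS : ∀ x y : L, ⁅x, y⁆ ∈ S) (A B : Set L) :
    Submodule.span R {w : L | ∃ a ∈ A, ∃ b ∈ B, w = ⁅a, b⁆} ≤ S :=
  Submodule.span_le.mpr <| by
    rintro w ⟨a, -, b, -, rfl⟩
    exact hS a b

theorem decomposition_h_levi_nilradical_centerf_general
    {L : Type*} [LieRing L] [LieAlgebra ℝ L]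
    (h m Cmh f Lev Nilg : Submodule ℝ L)
    -- `g = h + m`
    (hgm : ∀ x : L, ∃ a ∈ h, ∃ y ∈ m, x = a + y)
    -- full reducibility: `m = C_m(h) + ⁅h, m⁆`
    (hfullred : ∀ x ∈ m, ∃ c ∈ Cmh,
      ∃ b ∈ Submodule.span ℝ {w : L | ∃ a ∈ h, ∃ y ∈ m, w = ⁅a, y⁆}, x = c + b)
    -- `C_m(h) = C(g) + f`
    (hCmh : ∀ x ∈ Cmh, ∃ c : L, (∀ y : L, ⁅c, y⁆ = 0) ∧ ∃ d ∈ f, x = c + d)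
    -- `f` compact: `f = ⁅f,f⁆ + C(f)`
    (hfcompact : ∀ x ∈ f, ∃ d ∈ Submodule.span ℝ {w : L | ∃ u ∈ f, ∃ v ∈ f, w = ⁅u, v⁆},
      ∃ c ∈ f, (∀ y ∈ f, ⁅c, y⁆ = 0) ∧ x = d + c)
    -- `⁅g, g⁆ ⊆ Lev(g) + Nil(g)`
    (hderived : ∀ x y : L, ⁅x, y⁆ ∈ Lev ⊔ Nilg)
    -- `C(g) ⊆ Nil(g)`
    (hcenter : ∀ x : L, (∀ y : L, ⁅x, y⁆ = 0) → x ∈ Nilg) :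
    ∀ x : L, ∃ a ∈ h, ∃ b ∈ Lev, ∃ c ∈ Nilg, ∃ d ∈ f,
      (∀ y ∈ f, ⁅d, y⁆ = 0) ∧ x = a + b + c + d := by
  intro x
  obtain ⟨a, ha, y, hy, rfl⟩ := hgm x
  obtain ⟨c, hc, b, hb, rfl⟩ := hfullred y hy
  obtain ⟨z, hz, d, hd, rfl⟩ := hCmh c hc
  obtain ⟨d₁, hd₁, d₂, hd₂, hd₂_central, rfl⟩ := hfcompact d hd
  have hrest : b + d₁ + z ∈ Lev ⊔ Nilg :=
    add_mem (add_mem (LieAlgebra.span_lie_le_of_forall_lie_mem hderived _ _ hb)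
      (LieAlgebra.span_lie_le_of_forall_lie_mem hderived _ _ hd₁))
      (Submodule.mem_sup_right (hcenter z hz))
  obtain ⟨p, hp, q, hq, hpq⟩ := Submodule.mem_sup.mp hrest
  refine ⟨a, ha, p, hp, q, hq, d₂, hd₂, hd₂_central, ?_⟩
  rw [add_assoc a p q, hpq]
  abel

/-- key step of Corollary 2.4: If `g = h + m`, `ad(h)` acts fully reducibly on
`m` (so `m = C_m(h) + ⁅h,m⁆`), `C_m(h) = C(g) + f` with `f` a compact subalgebra (so
`f = ⁅f,f⁆ + C(f)`), then `g = h + Lev(g) + Nil(g) + C(f)`, where `Lev(g)` is a semisimple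
Levi factor and `Nil(g)` the nilradical (so `⁅g,g⁆ ⊆ Lev(g) + Nil(g)` and `C(g) ⊆ Nil(g)`). -/
theorem decomposition_h_levi_nilradical_centerf
    {L : Type*} [LieRing L] [LieAlgebra ℝ L] [Module.Finite ℝ L]
    (h m Cmh f Lev Nilg : Submodule ℝ L)
    -- `C_m(h)` is the centralizer of `h` in `m`
    (hCdef : ∀ x : L, x ∈ Cmh ↔ (x ∈ m ∧ ∀ a ∈ h, ⁅x, a⁆ = 0))
    -- `g = h + m`
    (hgm : ∀ x : L, ∃ a ∈ h, ∃ y ∈ m, x = a + y)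
    -- full reducibility: `m = C_m(h) + ⁅h, m⁆`
    (hfullred : ∀ x ∈ m, ∃ c ∈ Cmh,
      ∃ b ∈ Submodule.span ℝ {w : L | ∃ a ∈ h, ∃ y ∈ m, w = ⁅a, y⁆}, x = c + b)
    -- `C_m(h) = C(g) + f`
    (hCmh : ∀ x ∈ Cmh, ∃ c : L, (∀ y : L, ⁅c, y⁆ = 0) ∧ ∃ d ∈ f, x = c + d)
    -- `f` is a subalgebra
    (hfsub : ∀ x ∈ f, ∀ y ∈ f, ⁅x, y⁆ ∈ f)
    -- `f` compact: `f = ⁅f,f⁆ + C(f)`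
    (hfcompact : ∀ x ∈ f, ∃ d ∈ Submodule.span ℝ {w : L | ∃ u ∈ f, ∃ v ∈ f, w = ⁅u, v⁆},
      ∃ c ∈ f, (∀ y ∈ f, ⁅c, y⁆ = 0) ∧ x = d + c)
    -- `⁅g, g⁆ ⊆ Lev(g) + Nil(g)`
    (hderived : ∀ x y : L, ⁅x, y⁆ ∈ Lev ⊔ Nilg)
    -- `C(g) ⊆ Nil(g)`
    (hcenter : ∀ x : L, (∀ y : L, ⁅x, y⁆ = 0) → x ∈ Nilg) :
    ∀ x : L, ∃ a ∈ h, ∃ b ∈ Lev, ∃ c ∈ Nilg, ∃ d ∈ f,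
      (∀ y ∈ f, ⁅d, y⁆ = 0) ∧ x = a + b + c + d :=
  decomposition_h_levi_nilradical_centerf_general h m Cmh f Lev Nilg hgm hfullred hCmh hfcompact
    hderived hcenter
end

section
/- Let (G/H, g) be a Riemannian geodesic orbit space with reductive decomposition g = h + m (m the Killing-orthogonal complement of h) and inner product ⟨·,·⟩ on m. Let p be the orthogonal complement of the nilradical Nil(g) in m, and assume [h, p] ⊆ p and Nil(g) ⊆ m. Then for every Y ∈ p and X ∈ Nil(g), ⟨[Y, X], X⟩ = 0; i.e., ad(Y)|_{Nil(g)} has vanishing quadratic form, so g = o + Nil(g) where o = {Y ∈ g : ad(Y)|_{Nil(g)} is skew-symmetric}. -/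
/-- key step of Proposition 3.5: Let `(G/H, g)` be a geodesic orbit space with
reductive decomposition `g = h + m` and inner product `B` on `m`, let `N = Nil(g) ⊆ m` be the
nilradical and `p` the `B`-orthogonal complement of `N` in `m`, with `⁅h, p⁆ ⊆ p`.  Then
`B ⁅Y,X⁆ X = 0` for all `Y ∈ p`, `X ∈ N`; consequently `g = o + Nil(g)` where
`o = {Y : ad(Y)|_N is skew-symmetric}`. -/
theorem go_space_p_skew_on_nilradical
    {L : Type*} [LieRing L] [LieAlgebra ℝ L] [Module.Finite ℝ L]
    (H : LieSubalgebra ℝ L)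
    (hneg : ∀ A ∈ H, A ≠ 0 → killingForm ℝ L A A < 0)
    (m : Set L) (hm : m = {X : L | ∀ A ∈ H, killingForm ℝ L X A = 0})
    (hinv : ∀ A ∈ H, ∀ X ∈ m, ⁅A, X⁆ ∈ m)
    (B : L →ₗ[ℝ] L →ₗ[ℝ] ℝ)
    (hBsymm : ∀ X ∈ m, ∀ Y ∈ m, B X Y = B Y X)
    (hBpos : ∀ X ∈ m, X ≠ 0 → 0 < B X X)
    (P : L →ₗ[ℝ] L)
    (hPm : ∀ X : L, P X ∈ m) (hPid : ∀ X ∈ m, P X = X)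
    (hPh : ∀ X : L, X - P X ∈ (H : Set L))
    -- the geodesic orbit criterion of Kowalski–Vanhecke
    (hGO : ∀ X ∈ m, ∃ Z ∈ H, ∀ Y ∈ m, B (P ⁅X + Z, Y⁆) X = 0)
    -- `h` acts on `m` by skew-symmetric transformations
    (hskewh : ∀ Z ∈ H, ∀ X ∈ m, ∀ X' ∈ m, B ⁅Z, X⁆ X' = - B X ⁅Z, X'⁆)
    -- the nilradical: a nilpotent ideal contained in `m`
    (N : LieIdeal ℝ L) (hI : LieRing.IsNilpotent N) (hNm : (N : Set L) ⊆ m)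
    -- `p`: the orthogonal complement of `N` in `m`
    (p : Set L) (hp : p = {Y : L | Y ∈ m ∧ ∀ X ∈ N, B Y X = 0})
    (hhp : ∀ A ∈ H, ∀ Y ∈ p, ⁅A, Y⁆ ∈ p) :
    (∀ Y ∈ p, ∀ X ∈ N, B ⁅Y, X⁆ X = 0) ∧
    (∀ x : L, ∃ y : L, (∀ X ∈ N, ∀ X' ∈ N, B ⁅y, X⁆ X' = - B X ⁅y, X'⁆) ∧
      ∃ nn ∈ N, x = y + nn) := by
  -- m is closed under addition and subtraction
  have hm_add : ∀ a ∈ m, ∀ b ∈ m, a + b ∈ m := by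
    intro a ha b hb
    rw [hm] at ha hb ⊢
    intro A hA
    have := ha A hA; have := hb A hA
    simp only [LinearMap.map_add, LinearMap.add_apply, this, ‹killingForm ℝ L a A = 0›]
    ring
  have hm_sub : ∀ a ∈ m, ∀ b ∈ m, a - b ∈ m := by
    intro a ha b hb
    rw [hm] at ha hb ⊢
    intro A hA
    have h1 := ha A hA; have h2 := hb A hA
    simp only [LinearMap.map_sub, LinearMap.sub_apply, h1, h2]
    ring
  -- Part 1
  have key : ∀ Y ∈ p, ∀ X ∈ N, B ⁅Y, X⁆ X = 0 := by
    intro Y hY X hX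
    have hYp := hY
    rw [hp] at hYp
    obtain ⟨hYm, hYperp⟩ := hYp
    have hXm : X ∈ m := hNm hX
    have hXYm : X + Y ∈ m := hm_add X hXm Y hYm
    obtain ⟨Z, hZ, hcrit⟩ := hGO (X + Y) hXYm
    have hc := hcrit X hXm
    have hYXN : ⁅Y, X⁆ ∈ N := N.lie_mem hX
    have hYXm : ⁅Y, X⁆ ∈ m := hNm hYXN
    have hZXm : ⁅Z, X⁆ ∈ m := hinv Z hZ X hXm
    have hlie : ⁅X + Y + Z, X⁆ = ⁅Y, X⁆ + ⁅Z, X⁆ := by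
      simp [add_lie]
    rw [hlie] at hc
    rw [map_add P, hPid _ hYXm, hPid _ hZXm] at hc
    -- expand
    have hb : B ⁅Y, X⁆ Y = 0 := by
      rw [hBsymm _ hYXm _ hYm]
      exact hYperp _ hYXN
    have hcc : B ⁅Z, X⁆ X = 0 := by
      have h1 := hskewh Z hZ X hXm X hXm
      have h2 := hBsymm X hXm _ hZXm
      linarith [h1, h2]
    have hd : B ⁅Z, X⁆ Y = 0 := by
      have h1 := hskewh Z hZ X hXm Y hYm
      have hZYp : ⁅Z, Y⁆ ∈ p := hhp Z hZ Y hY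
      have hZYm : ⁅Z, Y⁆ ∈ m := by rw [hp] at hZYp; exact hZYp.1
      have h2 := hBsymm X hXm _ hZYm
      have h3 : B ⁅Z, Y⁆ X = 0 := by
        rw [hp] at hZYp; exact hZYp.2 X hX
      linarith
    have hexp : B (⁅Y, X⁆ + ⁅Z, X⁆) (X + Y)
        = B ⁅Y, X⁆ X + B ⁅Y, X⁆ Y + B ⁅Z, X⁆ X + B ⁅Z, X⁆ Y := by
      simp only [map_add, LinearMap.add_apply]; ring
    rw [hexp, hb, hcc, hd] at hc
    linarith
  refine ⟨key, ?_⟩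
  -- skewness of elements of p on N (polarization)
  have skewp : ∀ q ∈ p, ∀ X ∈ N, ∀ X' ∈ N, B ⁅q, X⁆ X' = - B X ⁅q, X'⁆ := by
    intro q hq X hX X' hX'
    have h1 := key q hq X hX
    have h2 := key q hq X' hX'
    have h3 := key q hq (X + X') (N.add_mem hX hX')
    have hXm : X ∈ m := hNm hX
    have hqX'm : ⁅q, X'⁆ ∈ m := hNm (N.lie_mem hX')
    have hsym : B X ⁅q, X'⁆ = B ⁅q, X'⁆ X := hBsymm X hXm _ hqX'm
    have hexp : B ⁅q, X + X'⁆ (X + X')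
        = B ⁅q, X⁆ X + B ⁅q, X⁆ X' + B ⁅q, X'⁆ X + B ⁅q, X'⁆ X' := by
      simp only [lie_add, map_add, LinearMap.add_apply]; ring
    rw [hexp, h1, h2] at h3
    linarith
  -- orthogonal projection onto N within m
  intro x
  set N' := N.toSubmodule with hN'
  have hinj : Function.Injective (B.compl₁₂ N'.subtype N'.subtype) := by
    rw [← LinearMap.ker_eq_bot]
    rw [Submodule.eq_bot_iff]
    intro n hn
    have h0 : B n.1 n.1 = 0 := by
      have : (B.compl₁₂ N'.subtype N'.subtype) n n = 0 := by
        rw [hn]; rfl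
      simpa using this
    by_contra hne
    have hn1 : (n : L) ≠ 0 := fun h => hne (Subtype.ext h)
    have := hBpos n.1 (hNm n.2) hn1
    rw [h0] at this
    exact lt_irrefl 0 this
  have hsurj : Function.Surjective (B.compl₁₂ N'.subtype N'.subtype) := by
    have hfr : Module.finrank ℝ N' = Module.finrank ℝ (Module.Dual ℝ N') :=
      (Subspace.dual_finrank_eq).symm
    exact (LinearMap.injective_iff_surjective_of_finrank_eq_finrank hfr).mp hinj
  obtain ⟨n, hn⟩ := hsurj ((B (P x)).domRestrict N')
  have hnB : ∀ X ∈ N, B (n : L) X = B (P x) X := by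
    intro X hX
    have := congrFun (congrArg (fun f => f.toFun) hn) ⟨X, hX⟩
    simpa using this
  set q := P x - (n : L) with hqdef
  have hqp : q ∈ p := by
    rw [hp]
    refine ⟨hm_sub _ (hPm x) _ (hNm n.2), ?_⟩
    intro X hX
    have := hnB X hX
    simp only [hqdef, map_sub, LinearMap.sub_apply]
    linarith
  refine ⟨(x - P x) + q, ?_, (n : L), n.2, by rw [hqdef]; abel⟩
  intro X hX X' hX'
  have hXm : X ∈ m := hNm hX
  have hX'm : X' ∈ m := hNm hX'
  have h1 := hskewh (x - P x) (hPh x) X hXm X' hX'm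
  have h2 := skewp q hqp X hX X' hX'
  have hlie : ⁅(x - P x) + q, X⁆ = ⁅x - P x, X⁆ + ⁅q, X⁆ := add_lie _ _ _
  have hlie' : ⁅(x - P x) + q, X'⁆ = ⁅x - P x, X'⁆ + ⁅q, X'⁆ := add_lie _ _ _
  rw [hlie, hlie', map_add, LinearMap.add_apply, map_add]
  linarith
end

section
/- Let g be a finite-dimensional real Lie algebra and l a maximal compactly embedded subalgebra such that l = (l ∩ Lev(g)) ⊕ (l ∩ Rad(g)) for a compatible Levi factor Lev(g), with l ∩ Rad(g) abelian and commuting with Lev(g). If h ⊆ l is a subalgebra with [l, l] ⊆ h, and k ⊆ l ∩ Lev(g) is a maximal compactly embedded subalgebra of the noncompact part Lev(g)_nc with Iwasawa decomposition Lev(g)_nc = k + s, then l ∩ (s + Nil(g)) = l ∩ Nil(g), and every X ∈ l ∩ Nil(g) lies in the center C(g). -/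
/-!
Write `x ∈ l ∩ (s + Nil(g))` as `x = σ + n` and, using `l = (l ∩ Lev(g)) + (l ∩ Rad(g))`, as
`x = a + b`. Since `Lev(g) ∩ Rad(g) = 0`, comparing components gives `a = σ`, so `σ` lies in
`s ∩ (l ∩ Lev(g)) = 0` and `x = n ∈ Nil(g)`. An element of `l ∩ Nil(g)` has `ad X` both semisimple
and nilpotent, hence `ad X = 0`.
-/

namespace Submodule

variable {R M : Type*} [Ring R] [AddCommGroup M] [Module R M]

theorem eq_of_add_eq_add_of_disjoint {p q : Submodule R M} (hpq : Disjoint p q) {a a' b b' : M}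
    (ha : a ∈ p) (ha' : a' ∈ p) (hb : b ∈ q) (hb' : b' ∈ q) (hab : a + b = a' + b') : a = a' := by
  have hsub : a - a' = b' - b := sub_eq_sub_iff_add_eq_add.mpr (hab.trans (add_comm _ _))
  exact sub_eq_zero.mp <| disjoint_def.mp hpq _ (p.sub_mem ha ha') (hsub ▸ q.sub_mem hb' hb)

theorem inf_sup_eq_inf_of_le_sup_of_disjoint {l s N A B : Submodule R M} (hl : l ≤ l ⊓ A ⊔ B)
    (hsA : s ≤ A) (hs : Disjoint s (l ⊓ A)) (hAB : Disjoint A B) (hNB : N ≤ B) :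
    l ⊓ (s ⊔ N) = l ⊓ N := by
  refine le_antisymm ?_ (inf_le_inf_left l le_sup_right)
  rintro x ⟨hxl, hxsN⟩
  obtain ⟨σ, hσ, n, hn, rfl⟩ := mem_sup.mp hxsN
  obtain ⟨a, ha, b, hb, hab⟩ := mem_sup.mp (hl hxl)
  have haσ : a = σ := eq_of_add_eq_add_of_disjoint hAB ha.2 (hsA hσ) hb (hNB hn) hab
  have hσ0 : σ = 0 := disjoint_def.mp hs σ hσ (haσ ▸ ha)
  subst hσ0
  simpa using And.intro hxl hn

end Submodule

theorem LieAlgebra.lie_eq_zero_of_isNilpotent_ad_of_isSemisimple {R L : Type*} [CommRing R]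
    [LieRing L] [LieAlgebra R L] {x : L} (hn : IsNilpotent (ad R L x))
    (hs : (ad R L x).IsSemisimple) (y : L) : ⁅x, y⁆ = 0 := by
  simpa using LinearMap.congr_fun (Module.End.eq_zero_of_isNilpotent_isSemisimple hn hs) y

theorem l_inter_s_nil_eq_and_central_general
    {L : Type*} [LieRing L] [LieAlgebra ℝ L]
    (l k s NilG Lev LevNc LevCp Radl : Submodule ℝ L)
    -- compatible decomposition `l = (l ∩ Lev) ⊕ (l ∩ Rad)`
    (hdecompl : ∀ x ∈ l, ∃ a ∈ l ⊓ Lev, ∃ b ∈ l ⊓ Radl, x = a + b)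
    -- `Lev = Lev_nc ⊕ Lev_cp`
    (hLev : Lev = LevNc ⊔ LevCp)
    -- Iwasawa decomposition `Lev_nc = k + s`
    (hIw : LevNc = k ⊔ s)
    -- `l ∩ Lev = k + Lev_cp` (maximality) and `s` meets it trivially
    (hlLev : l ⊓ Lev = k ⊔ LevCp) (hsk : s ⊓ (k ⊔ LevCp) = ⊥)
    -- Levi decomposition: `Lev ∩ Rad = 0`, and `Nil(g) ⊆ Rad`
    (hLevRad : Lev ⊓ Radl = ⊥) (hNilRad : NilG ≤ Radl)
    -- `ad X` is semisimple for `X` in the compactly embedded subalgebra `l`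
    (hss : ∀ X ∈ l, Module.End.IsSemisimple (LieAlgebra.ad ℝ L X))
    -- `ad X` is nilpotent for `X` in the nilradical
    (hnil : ∀ X ∈ NilG, IsNilpotent (LieAlgebra.ad ℝ L X)) :
    l ⊓ (s ⊔ NilG) = l ⊓ NilG ∧
    ∀ X ∈ l ⊓ NilG, ∀ Y : L, ⁅X, Y⁆ = 0 := by
  have hl : l ≤ l ⊓ Lev ⊔ Radl := fun x hx => by
    obtain ⟨a, ha, b, hb, rfl⟩ := hdecompl x hx
    exact Submodule.add_mem_sup ha hb.2
  have hsLev : s ≤ Lev := hLev ▸ hIw ▸ le_sup_right.trans le_sup_left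
  have hs : Disjoint s (l ⊓ Lev) := disjoint_iff.mpr (hlLev ▸ hsk)
  refine ⟨Submodule.inf_sup_eq_inf_of_le_sup_of_disjoint hl hsLev hs
    (disjoint_iff.mpr hLevRad) hNilRad, ?_⟩
  rintro X ⟨hXl, hXn⟩
  exact LieAlgebra.lie_eq_zero_of_isNilpotent_ad_of_isSemisimple (hnil X hXn) (hss X hXl)

/-- key step in Theorem 3.9: With `l` a maximal compactly embedded subalgebra,
compatible Levi decomposition `g = Lev(g) ⊕ Rad(g)`, `Lev(g) = Lev(g)_nc ⊕ Lev(g)_cp`, Iwasawa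
decomposition `Lev(g)_nc = k + s`, `l ∩ Lev(g) = k + Lev(g)_cp`, and `h ⊆ l` with
`⁅l, l⁆ ⊆ h`: one has `l ∩ (s + Nil(g)) = l ∩ Nil(g)`, and every `X ∈ l ∩ Nil(g)` is central
(since `ad X` is both semisimple and nilpotent). -/
theorem l_inter_s_nil_eq_and_central
    {L : Type*} [LieRing L] [LieAlgebra ℝ L] [Module.Finite ℝ L]
    (l h k s NilG Lev LevNc LevCp Radl : Submodule ℝ L)
    -- compatible decomposition `l = (l ∩ Lev) ⊕ (l ∩ Rad)`
    (hdecompl : ∀ x ∈ l, ∃ a ∈ l ⊓ Lev, ∃ b ∈ l ⊓ Radl, x = a + b)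
    -- `l ∩ Rad` is abelian and commutes with `Lev`
    (habel : ∀ x ∈ l ⊓ Radl, ∀ y ∈ l ⊓ Radl, ⁅x, y⁆ = 0)
    (hcomm : ∀ x ∈ l ⊓ Radl, ∀ y ∈ Lev, ⁅x, y⁆ = 0)
    -- `h ⊆ l` and `⁅l, l⁆ ⊆ h`
    (hh : h ≤ l) (hll : ∀ x ∈ l, ∀ y ∈ l, ⁅x, y⁆ ∈ h)
    -- `Lev = Lev_nc ⊕ Lev_cp`
    (hLev : Lev = LevNc ⊔ LevCp) (hLevdisj : LevNc ⊓ LevCp = ⊥)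
    -- Iwasawa decomposition `Lev_nc = k + s`
    (hIw : LevNc = k ⊔ s) (hks : k ⊓ s = ⊥) (hkl : k ≤ l ⊓ Lev)
    -- `l ∩ Lev = k + Lev_cp` (maximality) and `s` meets it trivially
    (hlLev : l ⊓ Lev = k ⊔ LevCp) (hsk : s ⊓ (k ⊔ LevCp) = ⊥)
    -- Levi decomposition: `Lev ∩ Rad = 0`, and `Nil(g) ⊆ Rad`
    (hLevRad : Lev ⊓ Radl = ⊥) (hNilRad : NilG ≤ Radl)
    -- `ad X` is semisimple for `X` in the compactly embedded subalgebra `l`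
    (hss : ∀ X ∈ l, Module.End.IsSemisimple (LieAlgebra.ad ℝ L X))
    -- `ad X` is nilpotent for `X` in the nilradical
    (hnil : ∀ X ∈ NilG, IsNilpotent (LieAlgebra.ad ℝ L X)) :
    l ⊓ (s ⊔ NilG) = l ⊓ NilG ∧
    ∀ X ∈ l ⊓ NilG, ∀ Y : L, ⁅X, Y⁆ = 0 :=
  l_inter_s_nil_eq_and_central_general l k s NilG Lev LevNc LevCp Radl hdecompl hLev hIw hlLev hsk
    hLevRad hNilRad hss hnil
end
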